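/- Let d ≥ 2 and let e be any directed edge of the Kautz digraph K(d,D). Then for every integer k with 1 ≤ k ≤ D, U_k(e) ≥ (k/D)·d^{−(D−k)}·U_D(e). -/

import Mathlib

open scoped BigOperators Classical

namespace Kautz

/-- A vertex of the Kautz digraph `K(d,D)`: a word of length `D` over the
alphabet `{0,1,…,d}` in which adjacent letters are distinct. -/
structure Vertex (d D : ℕ) where
  word : List (Fin (d+1))
  length_eq : word.length = D
  chain : word.Chain' (· ≠ ·)

/-- Adjacency in `K(d,D)`: there is an edge `u → v` iff some word `w` of length
`D+1` with adjacent letters distinct has `u` as its prefix of length `D` and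
`v` as its suffix of length `D`. -/
def Adj {d D : ℕ} (u v : Vertex d D) : Prop :=
  ∃ w : List (Fin (d+1)), w.length = D + 1 ∧ w.Chain' (· ≠ ·) ∧
    u.word = w.dropLast ∧ v.word = w.tail

/-- A directed edge of `K(d,D)`. -/
structure Edge (d D : ℕ) where
  src : Vertex d D
  tgt : Vertex d D
  adj : Adj src tgt

/-- The edge-word `w(e) = a₀a₁⋯a_D` of an edge `e : u → v`, namely `u`
followed by the last letter of `v`. -/
def Edge.word {d D : ℕ} (e : Edge d D) : List (Fin (d+1)) :=
  e.src.word ++ e.tgt.word.drop (D - 1)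

/-- `p` is a walk from `x` to `y`, recorded as the list of successive vertices. -/
def IsWalk {d D : ℕ} (p : List (Vertex d D)) (x y : Vertex d D) : Prop :=
  p.head? = some x ∧ p.getLast? = some y ∧ p.Chain' Adj

/-- Directed graph distance in `K(d,D)`. -/
noncomputable def dist {d D : ℕ} (x y : Vertex d D) : ℕ :=
  sInf {k | ∃ p : List (Vertex d D), IsWalk p x y ∧ p.length = k + 1}

/-- `N(e;k,t)`: the number of ordered pairs `(x,y)` with `dist x y = k` such
that some geodesic (walk of length `k = dist x y`) from `x` to `y` uses `e` as
its `t`-th edge. -/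
noncomputable def N {d D : ℕ} (e : Edge d D) (k t : ℕ) : ℕ :=
  Set.ncard {xy : Vertex d D × Vertex d D |
    dist xy.1 xy.2 = k ∧
    ∃ p : List (Vertex d D), IsWalk p xy.1 xy.2 ∧ p.length = k + 1 ∧
      p[t-1]? = some e.src ∧ p[t]? = some e.tgt}

/-- `U_k(e) = ∑_{t=1}^{k} N(e;k,t)`. -/
noncomputable def U {d D : ℕ} (e : Edge d D) (k : ℕ) : ℕ :=
  ∑ t ∈ Finset.Icc 1 k, N e k t

/-- `cong(e) = ∑_{k=1}^{D} U_k(e)`. -/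
noncomputable def cong {d D : ℕ} (e : Edge d D) : ℕ :=
  ∑ k ∈ Finset.Icc 1 D, U e k

/-- `τ(d,D) = (D−1)·d^{D−2} + D·d^{D−1}`. -/
def tau (d D : ℕ) : ℕ := (D - 1) * d ^ (D - 2) + D * d ^ (D - 1)

/-- A word has a border: some proper nonempty prefix equals the suffix of the
same length. -/
def HasBorder {α : Type*} (w : List α) : Prop :=
  ∃ ℓ, 1 ≤ ℓ ∧ ℓ ≤ w.length - 1 ∧ w.take ℓ = w.drop (w.length - ℓ)

/-- An unbordered word. -/
def Unbordered {α : Type*} (w : List α) : Prop := ¬ HasBorder w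

/-- A square-free word: no nonempty factor of the form `XX`. -/
def SquareFree {α : Type*} (w : List α) : Prop :=
  ¬ ∃ X : List α, X ≠ [] ∧ (X ++ X) <:+: w

/-- A `7/4⁺`-power-free word: no factor `x^k y` with `x` nonempty, `k ≥ 1`,
`y` a prefix of `x`, and `(k·|x| + |y|)/|x| > 7/4`. -/
def SevenFourthsPlusFree {α : Type*} (w : List α) : Prop :=
  ¬ ∃ (x y : List α) (k : ℕ), x ≠ [] ∧ 1 ≤ k ∧ y <+: x ∧
    ((List.replicate k x).flatten ++ y) <:+: w ∧
    7 * x.length < 4 * (k * x.length + y.length)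

/-- A word over `{0,1,…,d}` is ternary if it uses only the letters `{0,1,2}`. -/
def IsTernary {n : ℕ} (w : List (Fin n)) : Prop := ∀ a ∈ w, (a : ℕ) < 3

/-- The suffix of `w` of length `t`. -/
def suffixWord {α : Type*} (w : List α) (t : ℕ) : List α := w.drop (w.length - t)

/-- `R_t(w)`: the set of admissible overlap lengths `r` at position `t`, i.e.
those `r` with `t+1 ≤ r ≤ |w|−t−1` such that `w = A·B·V·B` where `B` is the
suffix of `w` of length `t`, `V` is nonempty, and `|B·V| = r`. -/
noncomputable def Rt {α : Type*} (w : List α) (t : ℕ) : Finset ℕ :=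
  (Finset.Icc (t + 1) (w.length - t - 1)).filter fun r =>
    ∃ A V : List α, V ≠ [] ∧
      w = A ++ suffixWord w t ++ V ++ suffixWord w t ∧ t + V.length = r

/-- The deficit `Δ_t(e) = d^{D−1} − N(e;D,t)`. -/
noncomputable def deficit {d D : ℕ} (e : Edge d D) (t : ℕ) : ℝ :=
  (d : ℝ) ^ (D - 1) - (N e D t : ℝ)

/-- The total deficit `Δ(e) = ∑_{t=1}^{D} Δ_t(e)`. -/
noncomputable def totalDeficit {d D : ℕ} (e : Edge d D) : ℝ :=
  ∑ t ∈ Finset.Icc 1 D, deficit e t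

/-- The weighted overlap count
`Ω_d(e) = ∑_{j=1}^{⌈(D+1)/2⌉} ∑_{r ∈ R_j(w(e))} d^{−(r−j)}`. -/
noncomputable def Omega {d D : ℕ} (e : Edge d D) : ℝ :=
  ∑ j ∈ Finset.Icc 1 ((D + 2) / 2), ∑ r ∈ Rt e.word j, (d : ℝ) ^ ((j : ℤ) - (r : ℤ))

/-- The overlap `ov(u,v)`: the largest `j ≤ D` such that the last `j` letters
of `u` equal the first `j` letters of `v`. -/
noncomputable def ov {d D : ℕ} (u v : Vertex d D) : ℕ :=
  sSup {j | j ≤ D ∧ u.word.drop (D - j) = v.word.take j}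

end Kautz

/-!
A geodesic of length `D` that uses `e` as its `(i+t)`-th edge contains, between its vertices
number `i` and `i+k`, a geodesic of length `k` that uses `e` as its `t`-th edge. Conversely the
endpoints of the long geodesic are recovered from that subpath by choosing a backward walk of
length `i` and a forward walk of length `D-k-i`, at most `d^(D-k)` choices in all. Hence
`N(e;D,i+t) ≤ d^(D-k) N(e;k,t)` whenever `i + k ≤ D`.

Each `m < kD` pairs the long position `⌊m/k⌋+1` with the short position `⌊m/D⌋+1`, and these
always differ by such an admissible shift `i`. Every long position occurs `k` times and every short
one `D` times, so summing over `m` gives `k U_D(e) ≤ D d^(D-k) U_k(e)`.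
-/

theorem Finset.sum_range_mul_div {M : Type*} [AddCommMonoid M] (f : ℕ → M) (a b : ℕ) :
    ∑ m ∈ Finset.range (a * b), f (m / b) = b • ∑ t ∈ Finset.range a, f t := by
  induction a with
  | zero => simp
  | succ a ih =>
    have hblock : ∀ x ∈ Finset.range b, f ((a * b + x) / b) = f a := fun x hx => by
      have hx := Finset.mem_range.mp hx
      rw [Nat.mul_comm, Nat.add_comm, Nat.add_mul_div_left _ _ (by omega), Nat.div_eq_of_lt hx,
        Nat.zero_add]
    rw [Nat.succ_mul, Finset.sum_range_add, ih, Finset.sum_congr rfl hblock, Finset.sum_const,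
      Finset.card_range, Finset.sum_range_succ, smul_add]

theorem Nat.div_add_le_div_add_of_lt_mul {m k D : ℕ} (hkD : k ≤ D) (hm : m < k * D) :
    m / k + k ≤ m / D + D := by
  have hk : 0 < k := Nat.pos_of_ne_zero (by rintro rfl; simp at hm)
  obtain ⟨s, rfl⟩ := Nat.exists_eq_add_of_le hkD
  have hmD : m / (k + s) < k := (Nat.div_lt_iff_lt_mul (by omega)).mpr hm
  have hm' : m < (k + s) * (m / (k + s) + 1) := Nat.lt_mul_div_succ m (by omega)
  generalize m / (k + s) = a at hmD hm'
  suffices m / k < a + s + 1 by omega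
  rw [Nat.div_lt_iff_lt_mul hk]
  nlinarith

theorem Fin.ncard_setOf_ne {n : ℕ} (b : Fin (n + 1)) : {c | c ≠ b}.ncard = n := by
  rw [show {c | c ≠ b} = Set.univ \ {b} by ext; simp, Set.ncard_sdiff (by simp), Set.ncard_univ,
    Set.ncard_singleton, Nat.card_eq_fintype_card, Fintype.card_fin, Nat.add_sub_cancel]

section ChainCount

variable {V : Type*} [Finite V] (r : V → V → Prop) {m : ℕ}

theorem ncard_isChain_cons_le (hr : ∀ v, {z | r v z}.ncard ≤ m) (n : ℕ) (v : V) :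
    {l : List V | l.length = n ∧ (v :: l).IsChain r}.ncard ≤ m ^ n := by
  induction n generalizing v with
  | zero =>
    rw [show {l : List V | l.length = 0 ∧ (v :: l).IsChain r} = {[]} by
      ext l; simp +contextual [List.length_eq_zero_iff]]
    simp
  | succ n ih =>
    have hout := Set.toFinite {z | r v z}
    have hfin : ∀ z, {l : List V | l.length = n ∧ (z :: l).IsChain r}.Finite :=
      fun z => (List.finite_length_eq V n).subset fun _ hl => hl.1
    have hsub : {l : List V | l.length = n + 1 ∧ (v :: l).IsChain r} ⊆
        ⋃ z ∈ hout.toFinset, (z :: ·) '' {l | l.length = n ∧ (z :: l).IsChain r} := by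
      rintro (_ | ⟨z, l⟩) ⟨hlen, hchain⟩
      · simp at hlen
      · rw [List.isChain_cons_cons] at hchain
        exact Set.mem_biUnion (by simpa using hchain.1) ⟨l, ⟨by simpa using hlen, hchain.2⟩, rfl⟩
    calc _ ≤ _ := Set.ncard_le_ncard hsub
          (hout.toFinset.finite_toSet.biUnion fun z _ => (hfin z).image _)
      _ ≤ ∑ z ∈ hout.toFinset, ((z :: ·) '' {l | l.length = n ∧ (z :: l).IsChain r}).ncard :=
          Finset.set_ncard_biUnion_le _ _
      _ ≤ ∑ _z ∈ hout.toFinset, m ^ n :=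
          Finset.sum_le_sum fun z _ => (Set.ncard_image_le (hfin z)).trans (ih z)
      _ ≤ m * m ^ n := by
          rw [Finset.sum_const, smul_eq_mul, ← Set.ncard_eq_toFinset_card _ hout]
          exact Nat.mul_le_mul_right _ (hr v)
      _ = m ^ (n + 1) := (pow_succ' m n).symm

theorem ncard_isChain_append_le (hr : ∀ v, {z | r z v}.ncard ≤ m) (n : ℕ) (v : V) :
    {l : List V | l.length = n ∧ (l ++ [v]).IsChain r}.ncard ≤ m ^ n := by
  have hrev : {l : List V | l.length = n ∧ (l ++ [v]).IsChain r} =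
      List.reverse '' {l | l.length = n ∧ (v :: l).IsChain fun a b => r b a} := by
    refine Set.ext fun l => ⟨fun hl => ⟨l.reverse, ?_, l.reverse_reverse⟩, ?_⟩
    · simpa using And.intro hl.1 (List.isChain_reverse (R := fun a b => r b a).mpr hl.2)
    · rintro ⟨l, hl, rfl⟩
      simpa using And.intro hl.1 (List.isChain_reverse (R := r).mpr hl.2)
  rw [hrev, Set.ncard_image_of_injective _ List.reverse_injective]
  exact ncard_isChain_cons_le (fun a b => r b a) hr n v

end ChainCount

namespace Kautz

variable {d D : ℕ}

theorem Vertex.word_injective :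
    Function.Injective (Vertex.word : Vertex d D → List (Fin (d + 1))) := by
  rintro ⟨u, _, _⟩ ⟨v, _, _⟩ rfl
  rfl

instance : Finite (Vertex d D) :=
  Finite.of_injective (β := List.Vector (Fin (d + 1)) D) (fun v => ⟨v.word, v.length_eq⟩)
    fun _ _ h => Vertex.word_injective (congrArg Subtype.val h)

theorem Vertex.word_ne_nil (hD : 1 ≤ D) (v : Vertex d D) : v.word ≠ [] := by
  rw [← List.length_pos_iff, v.length_eq]
  omega

theorem Adj.exists_word_eq_tail_append (hD : 1 ≤ D) {u v : Vertex d D} (h : Adj u v) :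
    ∃ c, u.word.getLast? ≠ some c ∧ v.word = u.word.tail ++ [c] := by
  obtain ⟨w, hlen, hchain, hu, hv⟩ := h
  have hw : w ≠ [] := by rintro rfl; simp at hlen
  obtain ⟨ys, c, rfl⟩ : ∃ ys c, w = ys ++ [c] :=
    ⟨w.dropLast, w.getLast hw, (List.dropLast_append_getLast hw).symm⟩
  simp only [List.dropLast_concat] at hu
  subst hu
  refine ⟨c, fun hc => ?_, ?_⟩
  · exact List.isChain_append.mp hchain |>.2.2 c hc c rfl rfl
  · rw [hv, List.tail_append_of_ne_nil (u.word_ne_nil hD)]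

theorem Adj.exists_word_eq_cons_dropLast (hD : 1 ≤ D) {u v : Vertex d D} (h : Adj u v) :
    ∃ c, v.word.head? ≠ some c ∧ u.word = c :: v.word.dropLast := by
  obtain ⟨w, hlen, hchain, hu, hv⟩ := h
  obtain ⟨c, ys, rfl⟩ : ∃ c ys, w = c :: ys := by
    cases w with
    | nil => simp at hlen
    | cons c ys => exact ⟨c, ys, rfl⟩
  simp only [List.tail_cons] at hv
  subst hv
  refine ⟨c, fun hc => ?_, ?_⟩
  · exact List.isChain_cons.mp hchain |>.1 c hc rfl
  · rw [hu, List.dropLast_cons_of_ne_nil (v.word_ne_nil hD)]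

theorem ncard_adj_right_le (hD : 1 ≤ D) (u : Vertex d D) : {v | Adj u v}.ncard ≤ d := by
  obtain ⟨b, hb⟩ := Option.isSome_iff_exists.mp
    (List.getLast?_isSome.mpr (u.word_ne_nil hD))
  calc {v | Adj u v}.ncard ≤ {c | c ≠ b}.ncard := by
        refine Set.ncard_le_ncard_of_injOn (fun v => v.word.getLastD b) ?_ ?_
        · intro v huv
          obtain ⟨c, hc, hv⟩ := huv.exists_word_eq_tail_append hD
          simpa [hv, hb, eq_comm] using hc
        · intro v₁ h₁ v₂ h₂ hv
          obtain ⟨c₁, -, hv₁⟩ := Adj.exists_word_eq_tail_append hD h₁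
          obtain ⟨c₂, -, hv₂⟩ := Adj.exists_word_eq_tail_append hD h₂
          simp only [hv₁, hv₂, List.getLastD_concat] at hv
          exact Vertex.word_injective (by rw [hv₁, hv₂, hv])
    _ = d := Fin.ncard_setOf_ne b

theorem ncard_adj_left_le (hD : 1 ≤ D) (v : Vertex d D) : {u | Adj u v}.ncard ≤ d := by
  obtain ⟨b, hb⟩ := Option.isSome_iff_exists.mp (List.isSome_head?.mpr (v.word_ne_nil hD))
  calc {u | Adj u v}.ncard ≤ {c | c ≠ b}.ncard := by
        refine Set.ncard_le_ncard_of_injOn (fun u => u.word.headD b) ?_ ?_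
        · intro u huv
          obtain ⟨c, hc, hu⟩ := Adj.exists_word_eq_cons_dropLast hD huv
          simpa [hu, hb, eq_comm] using hc
        · intro u₁ h₁ u₂ h₂ hu
          obtain ⟨c₁, -, hu₁⟩ := Adj.exists_word_eq_cons_dropLast hD h₁
          obtain ⟨c₂, -, hu₂⟩ := Adj.exists_word_eq_cons_dropLast hD h₂
          simp only [hu₁, hu₂, List.headD_cons] at hu
          exact Vertex.word_injective (by rw [hu₁, hu₂, hu])
    _ = d := Fin.ncard_setOf_ne b

theorem IsWalk.append {p q : List (Vertex d D)} {x y z : Vertex d D} (hp : IsWalk p x y)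
    (hq : IsWalk q y z) : IsWalk (p ++ q.tail) x z := by
  obtain ⟨hpx, hpy, hpc⟩ := hp
  obtain ⟨hqy, hqz, hqc⟩ := hq
  obtain ⟨p, rfl⟩ := List.getLast?_eq_some_iff.mp hpy
  obtain ⟨q, rfl⟩ := List.head?_eq_some_iff.mp hqy
  refine ⟨by simpa using hpx, ?_, hpc.append_overlap hqc (List.cons_ne_nil y [])⟩
  rw [List.tail_cons, List.append_assoc, List.singleton_append,
    List.getLast?_append_of_ne_nil _ (List.cons_ne_nil y q)]
  exact hqz

theorem IsWalk.exists_trans {p q : List (Vertex d D)} {x y z : Vertex d D}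
    {a b : ℕ} (hp : IsWalk p x y) (hpl : p.length = a + 1) (hq : IsWalk q y z)
    (hql : q.length = b + 1) : ∃ r, IsWalk r x z ∧ r.length = a + b + 1 :=
  ⟨p ++ q.tail, hp.append hq, by simp [hpl, hql]; omega⟩

theorem isWalk_drop_take {p : List (Vertex d D)} (hp : p.IsChain Adj) {i j : ℕ} (hij : i ≤ j)
    {u v : Vertex d D} (hu : p[i]? = some u) (hv : p[j]? = some v) :
    IsWalk ((p.drop i).take (j - i + 1)) u v ∧
      ((p.drop i).take (j - i + 1)).length = j - i + 1 := by
  obtain ⟨hj, -⟩ := List.getElem?_eq_some_iff.mp hv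
  have hlen : ((p.drop i).take (j - i + 1)).length = j - i + 1 := by simp; omega
  refine ⟨⟨?_, ?_, (hp.drop i).take _⟩, hlen⟩
  · simpa [List.head?_eq_getElem?] using hu
  · rw [List.getLast?_eq_getElem?, hlen, List.getElem?_take, if_pos (by omega), List.getElem?_drop,
      Nat.add_sub_cancel, Nat.add_sub_cancel' hij]
    exact hv

theorem dist_le_of_isWalk {p : List (Vertex d D)} {x y : Vertex d D} {n : ℕ} (hp : IsWalk p x y)
    (hpl : p.length = n + 1) : dist x y ≤ n :=
  Nat.sInf_le ⟨p, hp, hpl⟩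

theorem exists_isWalk_length_dist {p : List (Vertex d D)} {x y : Vertex d D} {n : ℕ}
    (hp : IsWalk p x y) (hpl : p.length = n + 1) :
    ∃ q, IsWalk q x y ∧ q.length = dist x y + 1 :=
  Nat.sInf_mem (s := {k | ∃ q, IsWalk q x y ∧ q.length = k + 1}) ⟨n, p, hp, hpl⟩

theorem IsWalk.getElem?_zero {p : List (Vertex d D)} {x y : Vertex d D} (hp : IsWalk p x y) :
    p[0]? = some x := by
  rw [← List.head?_eq_getElem?]; exact hp.1

theorem IsWalk.getElem?_length_sub_one {p : List (Vertex d D)} {x y : Vertex d D}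
    (hp : IsWalk p x y) : p[p.length - 1]? = some y := by
  rw [← List.getLast?_eq_getElem?]; exact hp.2.1

theorem dist_eq_of_isWalk_of_length_eq {p : List (Vertex d D)} {x y u v : Vertex d D}
    (hp : IsWalk p x y) (hpl : p.length = dist x y + 1) {i j : ℕ} (hij : i ≤ j)
    (hu : p[i]? = some u) (hv : p[j]? = some v) : dist u v = j - i := by
  obtain ⟨hj, -⟩ := List.getElem?_eq_some_iff.mp hv
  obtain ⟨hseg, hsegl⟩ := isWalk_drop_take hp.2.2 hij hu hv
  obtain ⟨hpre, hprel⟩ := isWalk_drop_take hp.2.2 (Nat.zero_le i) hp.getElem?_zero hu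
  obtain ⟨hsuf, hsufl⟩ := isWalk_drop_take hp.2.2 (show j ≤ p.length - 1 by omega) hv
    hp.getElem?_length_sub_one
  -- splice a geodesic from `u` to `v` into `p`; the result is no shorter than `dist x y`
  obtain ⟨q, hq, hql⟩ := exists_isWalk_length_dist hseg hsegl
  obtain ⟨r, hr, hrl⟩ := hpre.exists_trans hprel hq hql
  obtain ⟨s, hs, hsl⟩ := hr.exists_trans hrl hsuf hsufl
  have := dist_le_of_isWalk hs hsl
  have := dist_le_of_isWalk hseg hsegl
  omega

theorem ncard_walk_endpoints_le (hD : 1 ≤ D) (n i j : ℕ) (u v : Vertex d D) :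
    {xy : Vertex d D × Vertex d D | ∃ p, IsWalk p xy.1 xy.2 ∧ p.length = n + 1 ∧
      p[i]? = some u ∧ p[j]? = some v}.ncard ≤ d ^ i * d ^ (n - j) := by
  set L := {l : List (Vertex d D) | l.length = i ∧ (l ++ [u]).IsChain Adj}
  set R := {l : List (Vertex d D) | l.length = n - j ∧ (v :: l).IsChain Adj}
  have hsub : {xy : Vertex d D × Vertex d D | ∃ p, IsWalk p xy.1 xy.2 ∧ p.length = n + 1 ∧
      p[i]? = some u ∧ p[j]? = some v} ⊆
      (fun lr => (lr.1.headD u, lr.2.getLastD v)) '' L ×ˢ R := by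
    rintro ⟨x, y⟩ ⟨p, hp, hpl, hu, hv⟩
    obtain ⟨hi, hpu⟩ := List.getElem?_eq_some_iff.mp hu
    obtain ⟨hj, hpv⟩ := List.getElem?_eq_some_iff.mp hv
    have htake : p.take i ++ [u] = p.take (i + 1) := by rw [List.take_add_one, hu]; rfl
    have hdrop : v :: p.drop (j + 1) = p.drop j := by rw [List.drop_eq_getElem_cons hj, hpv]
    refine ⟨(p.take i, p.drop (j + 1)), ⟨⟨by simp; omega, ?_⟩, by simp; omega, ?_⟩, ?_⟩
    · exact htake ▸ hp.2.2.take _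
    · exact hdrop ▸ hp.2.2.drop _
    · show ((p.take i).headD u, (p.drop (j + 1)).getLastD v) = (x, y)
      rw [List.headD_eq_head?, List.head?_take, List.getLastD_eq_getLast?, List.getLast?_drop,
        hp.1, hp.2.1]
      congr 1
      · split_ifs with hi0
        · subst hi0
          exact Option.some.inj (hu.symm.trans hp.getElem?_zero)
        · rfl
      · split_ifs with hjn
        · rw [show j = p.length - 1 by omega] at hv
          exact Option.some.inj (hv.symm.trans hp.getElem?_length_sub_one)
        · rfl
  have hLfin : L.Finite := (List.finite_length_eq _ i).subset fun _ hl => hl.1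
  have hRfin : R.Finite := (List.finite_length_eq _ (n - j)).subset fun _ hl => hl.1
  calc _ ≤ _ := Set.ncard_le_ncard hsub ((hLfin.prod hRfin).image _)
    _ ≤ (L ×ˢ R).ncard := Set.ncard_image_le (hLfin.prod hRfin)
    _ = L.ncard * R.ncard := Set.ncard_prod
    _ ≤ d ^ i * d ^ (n - j) := Nat.mul_le_mul
        (ncard_isChain_append_le Adj (ncard_adj_left_le hD) i u)
        (ncard_isChain_cons_le Adj (ncard_adj_right_le hD) (n - j) v)

theorem N_le_pow_mul_N (e : Edge d D) {i k t : ℕ} (hik : i + k ≤ D) (ht : 1 ≤ t) (htk : t ≤ k) :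
    N e D (i + t) ≤ d ^ (D - k) * N e k t := by
  have hD : 1 ≤ D := by omega
  set T := {uv : Vertex d D × Vertex d D | dist uv.1 uv.2 = k ∧ ∃ q, IsWalk q uv.1 uv.2 ∧
    q.length = k + 1 ∧ q[t - 1]? = some e.src ∧ q[t]? = some e.tgt}
  set F : Vertex d D × Vertex d D → Set (Vertex d D × Vertex d D) := fun uv =>
    {xy | ∃ p, IsWalk p xy.1 xy.2 ∧ p.length = D + 1 ∧ p[i]? = some uv.1 ∧ p[i + k]? = some uv.2}
  have hT : T.Finite := Set.toFinite T
  have hcover : {xy : Vertex d D × Vertex d D | dist xy.1 xy.2 = D ∧ ∃ p, IsWalk p xy.1 xy.2 ∧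
      p.length = D + 1 ∧ p[i + t - 1]? = some e.src ∧ p[i + t]? = some e.tgt} ⊆
      ⋃ uv ∈ hT.toFinset, F uv := by
    rintro ⟨x, y⟩ ⟨hxy, p, hp, hpl, hsrc, htgt⟩
    obtain ⟨u, hu⟩ : ∃ u, p[i]? = some u := ⟨_, List.getElem?_eq_getElem (by omega)⟩
    obtain ⟨v, hv⟩ : ∃ v, p[i + k]? = some v := ⟨_, List.getElem?_eq_getElem (by omega)⟩
    obtain ⟨hq, hql⟩ := isWalk_drop_take hp.2.2 (Nat.le_add_right i k) hu hv
    rw [Nat.add_sub_cancel_left] at hq hql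
    have huv : dist u v = k := by
      simpa using dist_eq_of_isWalk_of_length_eq hp (by rw [hpl, hxy]) (Nat.le_add_right i k) hu hv
    have hsrc' : ((p.drop i).take (k + 1))[t - 1]? = some e.src := by
      rw [List.getElem?_take, if_pos (by omega), List.getElem?_drop, ← hsrc]
      congr 1; omega
    have htgt' : ((p.drop i).take (k + 1))[t]? = some e.tgt := by
      rwa [List.getElem?_take, if_pos (by omega), List.getElem?_drop]
    exact Set.mem_biUnion (x := (u, v)) (hT.mem_toFinset.mpr ⟨huv, _, hq, hql, hsrc', htgt'⟩)
      ⟨p, hp, hpl, hu, hv⟩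
  calc N e D (i + t) ≤ (⋃ uv ∈ hT.toFinset, F uv).ncard :=
        Set.ncard_le_ncard hcover (Set.toFinite _)
    _ ≤ ∑ uv ∈ hT.toFinset, (F uv).ncard := Finset.set_ncard_biUnion_le _ _
    _ ≤ ∑ _uv ∈ hT.toFinset, d ^ (D - k) := Finset.sum_le_sum fun uv _ =>
        (ncard_walk_endpoints_le hD D i (i + k) uv.1 uv.2).trans_eq
          (by rw [← pow_add]; congr 1; omega)
    _ = d ^ (D - k) * N e k t := by
        rw [Finset.sum_const, smul_eq_mul, mul_comm, ← Set.ncard_eq_toFinset_card _ hT]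
        rfl

theorem U_eq_sum_range (e : Edge d D) (k : ℕ) : U e k = ∑ t ∈ Finset.range k, N e k (t + 1) := by
  rw [U, Finset.range_eq_Ico, Finset.sum_Ico_add' (N e k), Nat.zero_add,
    ← Finset.Ico_add_one_right_eq_Icc]

theorem mul_U_le (e : Edge d D) {k : ℕ} (hkD : k ≤ D) :
    k * U e D ≤ D * (d ^ (D - k) * U e k) := by
  calc k * U e D = ∑ m ∈ Finset.range (D * k), N e D (m / k + 1) := by
        rw [U_eq_sum_range, Finset.sum_range_mul_div (fun t => N e D (t + 1)), smul_eq_mul]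
    _ ≤ ∑ m ∈ Finset.range (k * D), d ^ (D - k) * N e k (m / D + 1) := by
        rw [Nat.mul_comm D k]
        refine Finset.sum_le_sum fun m hm => ?_
        have hm := Finset.mem_range.mp hm
        have hk : 0 < k := Nat.pos_of_ne_zero (by rintro rfl; simp at hm)
        have hshift := Nat.div_add_le_div_add_of_lt_mul hkD hm
        have hDk : m / D ≤ m / k := Nat.div_le_div_left hkD hk
        have hmD : m / D < k := (Nat.div_lt_iff_lt_mul (by omega)).mpr hm
        obtain ⟨i, hi⟩ := Nat.exists_eq_add_of_le hDk
        rw [hi, Nat.add_comm (m / D) i, Nat.add_assoc]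
        exact N_le_pow_mul_N e (by omega) (Nat.le_add_left 1 _) hmD
    _ = D * (d ^ (D - k) * U e k) := by
        rw [Finset.sum_range_mul_div (fun t => d ^ (D - k) * N e k (t + 1)), smul_eq_mul,
          ← Finset.mul_sum, U_eq_sum_range]

end Kautz

/-- For `d ≥ 2`, any directed edge `e` of `K(d,D)` and any `1 ≤ k ≤ D`,
`U_k(e) ≥ (k/D)·d^{−(D−k)}·U_D(e)`. -/
theorem statement8 (d D : ℕ) (hd : 2 ≤ d) (e : Kautz.Edge d D)
    (k : ℕ) (hk1 : 1 ≤ k) (hkD : k ≤ D) :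
    ((k : ℝ) / (D : ℝ)) * (d : ℝ) ^ ((k : ℤ) - (D : ℤ)) * (Kautz.U e D : ℝ)
      ≤ (Kautz.U e k : ℝ) := by
  have hcount : (k : ℝ) * Kautz.U e D ≤ D * ((d : ℝ) ^ (D - k) * Kautz.U e k) := by
    exact_mod_cast Kautz.mul_U_le e hkD
  have hD : (0 : ℝ) < D := by exact_mod_cast hk1.trans hkD
  have hdpow : (0 : ℝ) < (d : ℝ) ^ (D - k) := pow_pos (Nat.cast_pos.mpr (by omega)) _
  have hzpow : (d : ℝ) ^ ((k : ℤ) - (D : ℤ)) = ((d : ℝ) ^ (D - k))⁻¹ := by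
    rw [← zpow_natCast, ← zpow_neg, Nat.cast_sub hkD, neg_sub]
  calc (k : ℝ) / D * (d : ℝ) ^ ((k : ℤ) - (D : ℤ)) * Kautz.U e D
      = k * Kautz.U e D / (D * (d : ℝ) ^ (D - k)) := by rw [hzpow]; field_simp
    _ ≤ D * ((d : ℝ) ^ (D - k) * Kautz.U e k) / (D * (d : ℝ) ^ (D - k)) := by gcongr
    _ = Kautz.U e k := by field_simp
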